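/- Let P be a probability distribution on X × A × B with |A| = |B| = |X| = 2. Then the no-signaling simultaneous guessing probability equals the classical simultaneous guessing probability. -/

import Mathlib

/-!
Deterministic strategies are no-signaling boxes, so the no-signaling value is at least the
classical one. Conversely, with binary outputs a no-signaling box `Q` has well-defined marginals
`t a = Pr[x_A = 0 | a]` and `s b = Pr[x_B = 0 | b]`, and at each input pair
`Q(0,0|a,b) ≤ min (t a) (s b)` and `Q(1,1|a,b) ≤ 1 - max (t a) (s b)`. These bounds are exactly
the probabilities that both parties output `x` when each rounds its marginal against a shared
uniform threshold `u ∈ (0,1]` (output `0` iff `u ≤` marginal). So the no-signaling value is at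
most the average over `u` of the values of classical strategies, hence at most the classical
optimum.
-/

open MeasureTheory Set

variable {X A B : Type*}

def guessValue [Fintype X] [Fintype A] [Fintype B] [DecidableEq X]
    (P : X → A → B → ℝ) (f : A → X) (g : B → X) : ℝ :=
  ∑ x, ∑ a, ∑ b, P x a b * if f a = x ∧ g b = x then 1 else 0

def nsValue [Fintype X] [Fintype A] [Fintype B]
    (P : X → A → B → ℝ) (Q : X → X → A → B → ℝ) : ℝ :=
  ∑ x, ∑ a, ∑ b, P x a b * Q x x a b

structure IsNoSignaling [Fintype X] (Q : X → X → A → B → ℝ) : Prop where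
  nonneg : ∀ xA xB a b, 0 ≤ Q xA xB a b
  sum_eq_one : ∀ a b, ∑ xA, ∑ xB, Q xA xB a b = 1
  sum_fst_eq : ∀ xB a a' b, ∑ xA, Q xA xB a b = ∑ xA, Q xA xB a' b
  sum_snd_eq : ∀ xA a b b', ∑ xB, Q xA xB a b = ∑ xB, Q xA xB a b'

def deterministicBox [DecidableEq X] (f : A → X) (g : B → X) : X → X → A → B → ℝ :=
  fun xA xB a b => (if f a = xA then 1 else 0) * if g b = xB then 1 else 0

theorem isNoSignaling_deterministicBox [Fintype X] [DecidableEq X] (f : A → X) (g : B → X) :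
    IsNoSignaling (deterministicBox f g) where
  nonneg _ _ _ _ := by unfold deterministicBox; positivity
  sum_eq_one _ _ := by simp [deterministicBox]
  sum_fst_eq _ _ _ _ := by simp [deterministicBox]
  sum_snd_eq _ _ _ _ := by simp [deterministicBox]

theorem nsValue_deterministicBox [Fintype X] [Fintype A] [Fintype B] [DecidableEq X]
    (P : X → A → B → ℝ) (f : A → X) (g : B → X) :
    nsValue P (deterministicBox f g) = guessValue P f g := by
  simp only [nsValue, guessValue, deterministicBox, ite_zero_mul_ite_zero, mul_one]

theorem guessValue_nonneg [Fintype X] [Fintype A] [Fintype B] [DecidableEq X]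
    {P : X → A → B → ℝ} (hP : ∀ x a b, 0 ≤ P x a b) (f : A → X) (g : B → X) :
    0 ≤ guessValue P f g :=
  Finset.sum_nonneg fun x _ => Finset.sum_nonneg fun a _ => Finset.sum_nonneg fun b _ =>
    mul_nonneg (hP x a b) (by positivity)

namespace IsNoSignaling

variable [Fintype X] {Q : X → X → A → B → ℝ}

theorem exists_sum_snd_eq (hQ : IsNoSignaling Q) (xA : X) :
    ∃ t : A → ℝ, ∀ a b, ∑ xB, Q xA xB a b = t a := by
  by_cases hB : Nonempty B
  · exact ⟨fun a => ∑ xB, Q xA xB a hB.some, fun a b => hQ.sum_snd_eq xA a b _⟩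
  · exact ⟨0, fun _ b => (hB ⟨b⟩).elim⟩

theorem exists_sum_fst_eq (hQ : IsNoSignaling Q) (xB : X) :
    ∃ s : B → ℝ, ∀ a b, ∑ xA, Q xA xB a b = s b := by
  by_cases hA : Nonempty A
  · exact ⟨fun b => ∑ xA, Q xA xB hA.some b, fun a b => hQ.sum_fst_eq xB a _ b⟩
  · exact ⟨0, fun a _ => (hA ⟨a⟩).elim⟩

end IsNoSignaling

noncomputable def threshold (α u : ℝ) : Fin 2 := if u ≤ α then 0 else 1

theorem measurable_threshold (α : ℝ) : Measurable (threshold α) :=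
  Measurable.ite measurableSet_Iic measurable_const measurable_const

noncomputable def agreeProb (α β : ℝ) (x : Fin 2) : ℝ :=
  (volume.restrict (Ioc (0:ℝ) 1)).real {u | threshold α u = x ∧ threshold β u = x}

theorem measurableSet_agree (α β : ℝ) (x : Fin 2) :
    MeasurableSet {u | threshold α u = x ∧ threshold β u = x} :=
  (measurable_threshold α (measurableSet_singleton x)).inter
    (measurable_threshold β (measurableSet_singleton x))

theorem agreeProb_zero {α β : ℝ} (hα : α ∈ Icc 0 1) (hβ : β ∈ Icc 0 1) :
    agreeProb α β 0 = min α β := by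
  have hset : {u | threshold α u = 0 ∧ threshold β u = 0} = Iic (min α β) := by
    ext u; simp [threshold]
  rw [agreeProb, measureReal_restrict_apply (measurableSet_agree α β 0), hset,
    Iic_inter_Ioc_of_le (min_le_of_left_le hα.2), Real.volume_real_Ioc, sub_zero, max_eq_left (le_min hα.1 hβ.1)]

theorem agreeProb_one {α β : ℝ} (hα : α ∈ Icc 0 1) (hβ : β ∈ Icc 0 1) :
    agreeProb α β 1 = 1 - max α β := by
  have hset : {u | threshold α u = 1 ∧ threshold β u = 1} = Ioi (max α β) := by
    ext u; simp [threshold]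
  rw [agreeProb, measureReal_restrict_apply (measurableSet_agree α β 1), hset, inter_comm,
    Ioc_inter_Ioi, sup_eq_right.mpr (le_max_of_le_left hα.1), Real.volume_real_Ioc]
  exact max_eq_left (sub_nonneg.mpr (max_le hα.2 hβ.2))

theorem diag_le_agreeProb {q : Fin 2 → Fin 2 → ℝ} (hq0 : ∀ i j, 0 ≤ q i j)
    (hq1 : ∑ i, ∑ j, q i j = 1) (x : Fin 2) :
    q x x ≤ agreeProb (∑ j, q 0 j) (∑ i, q i 0) x := by
  simp only [Fin.sum_univ_two] at hq1 ⊢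
  have h00 := hq0 0 0; have h01 := hq0 0 1; have h10 := hq0 1 0; have h11 := hq0 1 1
  have hα : q 0 0 + q 0 1 ∈ Icc (0:ℝ) 1 := ⟨by linarith, by linarith⟩
  have hβ : q 0 0 + q 1 0 ∈ Icc (0:ℝ) 1 := ⟨by linarith, by linarith⟩
  revert x
  refine Fin.forall_fin_two.mpr ⟨?_, ?_⟩
  · rw [agreeProb_zero hα hβ]
    exact le_min (by linarith) (by linarith)
  · rw [agreeProb_one hα hβ]
    exact le_sub_comm.mpr (max_le (by linarith) (by linarith))

theorem indicator_setOf_one {α : Type*} (p : α → Prop) [DecidablePred p] :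
    {u | p u}.indicator 1 = fun u => if p u then (1:ℝ) else 0 := by
  ext u; simp [Set.indicator_apply]

theorem integral_guessValue_threshold [Fintype A] [Fintype B] (P : Fin 2 → A → B → ℝ)
    (t : A → ℝ) (s : B → ℝ) :
    ∫ u in Ioc (0:ℝ) 1, guessValue P (fun a => threshold (t a) u) (fun b => threshold (s b) u)
      = ∑ x, ∑ a, ∑ b, P x a b * agreeProb (t a) (s b) x := by
  have hint : ∀ x a b, Integrable (fun u => P x a b *
      if threshold (t a) u = x ∧ threshold (s b) u = x then (1:ℝ) else 0)
      (volume.restrict (Ioc (0:ℝ) 1)) := fun x a b =>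
    Integrable.const_mul (by
      rw [← indicator_setOf_one]
      exact (integrable_const 1).indicator (measurableSet_agree _ _ _)) _
  simp only [guessValue]
  rw [integral_finsetSum _ fun x _ => integrable_finsetSum _ fun a _ =>
    integrable_finsetSum _ fun b _ => hint x a b]
  refine Finset.sum_congr rfl fun x _ => ?_
  rw [integral_finsetSum _ fun a _ => integrable_finsetSum _ fun b _ => hint x a b]
  refine Finset.sum_congr rfl fun a _ => ?_
  rw [integral_finsetSum _ fun b _ => hint x a b]
  refine Finset.sum_congr rfl fun b _ => ?_
  rw [integral_const_mul, ← indicator_setOf_one,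
    integral_indicator_one (measurableSet_agree _ _ _), agreeProb]

theorem IsNoSignaling.nsValue_le [Fintype A] [Fintype B] {P : Fin 2 → A → B → ℝ}
    (hP : ∀ x a b, 0 ≤ P x a b) {Q : Fin 2 → Fin 2 → A → B → ℝ} (hQ : IsNoSignaling Q)
    {M : ℝ} (hM : ∀ f g, guessValue P f g ≤ M) :
    nsValue P Q ≤ M := by
  obtain ⟨t, ht⟩ := hQ.exists_sum_snd_eq 0
  obtain ⟨s, hs⟩ := hQ.exists_sum_fst_eq 0
  calc nsValue P Q
      ≤ ∑ x, ∑ a, ∑ b, P x a b * agreeProb (t a) (s b) x := by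
        unfold nsValue
        gcongr with x _ a _ b _
        · exact hP x a b
        · rw [← ht a b, ← hs a b]
          exact diag_le_agreeProb (hQ.nonneg · · a b) (hQ.sum_eq_one a b) x
    _ = ∫ u in Ioc (0:ℝ) 1,
          guessValue P (fun a => threshold (t a) u) (fun b => threshold (s b) u) :=
        (integral_guessValue_threshold P t s).symm
    _ ≤ ∫ _ in Ioc (0:ℝ) 1, M :=
        integral_mono_of_nonneg (ae_of_all _ fun _ => guessValue_nonneg hP _ _)
          (integrable_const M) (ae_of_all _ fun _ => hM _ _)
    _ = M := by simp

theorem ns_eq_classical_binary (P : Fin 2 → Fin 2 → Fin 2 → ℝ)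
    (hP0 : ∀ x a b, 0 ≤ P x a b) :
    sSup {p : ℝ | ∃ Q : Fin 2 → Fin 2 → Fin 2 → Fin 2 → ℝ,
        (∀ xA xB a b, 0 ≤ Q xA xB a b) ∧
        (∀ a b, ∑ xA, ∑ xB, Q xA xB a b = 1) ∧
        (∀ xB a a' b, ∑ xA, Q xA xB a b = ∑ xA, Q xA xB a' b) ∧
        (∀ xA a b b', ∑ xB, Q xA xB a b = ∑ xB, Q xA xB a b') ∧
        p = ∑ x, ∑ a, ∑ b, P x a b * Q x x a b} =
    sSup {p : ℝ | ∃ f g : Fin 2 → Fin 2,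
        p = ∑ x, ∑ a, ∑ b, P x a b * (if f a = x ∧ g b = x then 1 else 0)} := by
  obtain ⟨⟨f₀, g₀⟩, hmax⟩ :=
    Finite.exists_max fun fg : (Fin 2 → Fin 2) × (Fin 2 → Fin 2) => guessValue P fg.1 fg.2
  have hM : ∀ f g, guessValue P f g ≤ guessValue P f₀ g₀ := fun f g => hmax (f, g)
  refine (IsGreatest.csSup_eq (a := guessValue P f₀ g₀) ⟨?_, ?_⟩).trans
    (IsGreatest.csSup_eq ⟨?_, ?_⟩).symm
  · obtain ⟨h0, h1, hA, hB⟩ := isNoSignaling_deterministicBox (B := Fin 2) f₀ g₀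
    exact ⟨_, h0, h1, hA, hB, (nsValue_deterministicBox P f₀ g₀).symm⟩
  · rintro _ ⟨Q, hQ0, hQ1, hQA, hQB, rfl⟩
    exact IsNoSignaling.nsValue_le hP0 ⟨hQ0, hQ1, hQA, hQB⟩ hM
  · exact ⟨f₀, g₀, rfl⟩
  · rintro _ ⟨f, g, rfl⟩
    exact hM f g
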